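/- arXiv:1202.0140 — 2 statements merged into one kernel-verified Lean document; each statement's English description precedes it below -/
import Mathlib

section
/- For every code tree ω and every α with 0 < α < d^ω, there exist a nonzero finite Borel measure μ^ω on Σ^ω and a constant c(ω) < ∞ such that μ^ω([i_k]) ≤ c(ω) Φ^α(T_{i_k}^ω) for every cylinder [i_k] (k ∈ ℕ, i_k ∈ Σ_*^ω). -/
/-!
Since `α < d^ω`, some stage `j` of the natural measure is positive: every cover of `Σ^ω` by
cylinders of words of length `≥ j` has `Φ^α`-sum at least `M_j > 0`. Restricting such covers to
the paths through a cylinder `[w]` gives a set function `m` on the tree with `m(∅) = M_j`, which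
is subadditive over the children of a node, finite, and at most `Φ^α(T_w)` when `|w| ≥ j`.
Sharing the mass `m(∅)` down the tree in proportion to the values of `m` on the children yields
an additive mass distribution `ν ≤ m`. It is realised as the image of Lebesgue measure on
`[0, ν(∅))` under the map that follows, level by level, the nested intervals of lengths `ν(w)`.
The finitely many words shorter than `j` are absorbed into the constant.
-/

open MeasureTheory Filter Set Topology
open scoped ENNReal Topology

noncomputable section

namespace CodeTreeFractal

variable {Λ : Type*} {E : Type*} [NormedAddCommGroup E] [NormedSpace ℝ E]

/-- The word formed by the first `k` letters of an infinite path `i`. -/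
def word (i : ℕ → ℕ) (k : ℕ) : List ℕ := (List.range k).map i

/-- `w` belongs to the tree `Σ_*^ω` determined by the branching numbers `Mlam`
and the code tree `ω` : at each stage the next letter is below the branching
number of the label of the current node. (Letters are indexed from `0`.) -/
def IsNode (Mlam : Λ → ℕ) (ω : List ℕ → Λ) (w : List ℕ) : Prop :=
  ∀ j : Fin w.length, w.get j < Mlam (ω (w.take j))

/-- `i` is an infinite path of `Σ^ω`. -/
def IsPath (Mlam : Λ → ℕ) (ω : List ℕ → Λ) (i : ℕ → ℕ) : Prop :=
  ∀ k, i k < Mlam (ω (word i k))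

/-- The cylinder of infinite sequences beginning with the word `w`. -/
def cylinder (w : List ℕ) : Set (ℕ → ℕ) := {i | word i w.length = w}

/-- The set `Σ^ω` of infinite paths. -/
def pathSet (Mlam : Λ → ℕ) (ω : List ℕ → Λ) : Set (ℕ → ℕ) := {i | IsPath Mlam ω i}

/-- The composition `T_{i_1}^{ω(∅)} ∘ ⋯ ∘ T_{i_k}^{ω(i_1⋯i_{k-1})}` of the linear
parts along a word. -/
def prodT (T : Λ → ℕ → E →L[ℝ] E) : (List ℕ → Λ) → List ℕ → E →L[ℝ] E
  | _, [] => ContinuousLinearMap.id ℝ E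
  | ω, l :: w => (T (ω []) l).comp (prodT T (fun u => ω (l :: u)) w)

/-- The natural projection `Z_a^ω` sending a path to the corresponding point of the
code tree fractal. -/
def Z (T : Λ → ℕ → E →L[ℝ] E) (tr : Λ → ℕ → E) (ω : List ℕ → Λ) (i : ℕ → ℕ) : E :=
  ∑' k : ℕ, prodT T ω (word i k) (tr (ω (word i k)) (i k))

/-- The code tree fractal `A_a^ω`. -/
def attractor (Mlam : Λ → ℕ) (T : Λ → ℕ → E →L[ℝ] E) (tr : Λ → ℕ → E)
    (ω : List ℕ → Λ) : Set E :=
  {x | ∃ i : ℕ → ℕ, IsPath Mlam ω i ∧ Z T tr ω i = x}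

/-- The translation parts obtained from identified translation data
`a ∈ ℝ^{D·𝒜}` through the classes `cls (λ, i)` of the equivalence relation `∼`. -/
def trOf {A : Type*} {D : ℕ} (cls : Λ → ℕ → A) (a : EuclideanSpace ℝ (A × Fin D))
    (l : Λ) (i : ℕ) : EuclideanSpace ℝ (Fin D) :=
  WithLp.toLp 2 (fun d => a (cls l i, d))

/-- The `j`-th largest singular value (`j ≥ 1`) of a linear map, via the
Courant–Fischer minimax characterization. -/
def singVal (T : E →L[ℝ] E) (j : ℕ) : ℝ :=
  sSup {r : ℝ | ∃ V : Submodule ℝ E, Module.finrank ℝ V = j ∧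
    r = sInf {s : ℝ | ∃ v ∈ V, ‖v‖ = 1 ∧ s = ‖T v‖}}

/-- The singular value function `Φ^α(T) = σ₁ ⋯ σ_{m-1} σ_m^{α-m+1}` where
`m = min (⌊α⌋ + 1) D`. -/
def Phi (D : ℕ) (T : E →L[ℝ] E) (α : ℝ) : ℝ :=
  (∏ i ∈ Finset.range (min (⌊α⌋₊ + 1) D - 1), singVal T (i + 1)) *
    singVal T (min (⌊α⌋₊ + 1) D) ^ (α - ((min (⌊α⌋₊ + 1) D - 1 : ℕ) : ℝ))

/-- The sum `S^ω(k, α)` of the singular value function over the level-`k` nodes. -/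
def S (D : ℕ) (Mlam : Λ → ℕ) (T : Λ → ℕ → E →L[ℝ] E) (ω : List ℕ → Λ)
    (k : ℕ) (α : ℝ) : ℝ :=
  ∑' w : {w : List ℕ // w.length = k ∧ IsNode Mlam ω w}, Phi D (prodT T ω w.1) α

/-- The lower pressure `p_inf^ω(α)`. -/
def pinf (D : ℕ) (Mlam : Λ → ℕ) (T : Λ → ℕ → E →L[ℝ] E) (ω : List ℕ → Λ)
    (α : ℝ) : ℝ :=
  liminf (fun k : ℕ => Real.log (S D Mlam T ω k α) / k) atTop

/-- The upper pressure `p_sup^ω(α)`. -/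
def psup (D : ℕ) (Mlam : Λ → ℕ) (T : Λ → ℕ → E →L[ℝ] E) (ω : List ℕ → Λ)
    (α : ℝ) : ℝ :=
  limsup (fun k : ℕ => Real.log (S D Mlam T ω k α) / k) atTop

/-- The stage-`j` covering sums defining the natural measure `M_j^α(Σ^ω)`. -/
def natStage (D : ℕ) (Mlam : Λ → ℕ) (T : Λ → ℕ → E →L[ℝ] E) (ω : List ℕ → Λ)
    (α : ℝ) (j : ℕ) : ℝ≥0∞ :=
  ⨅ (J : Set (List ℕ)) (_ : ∀ w ∈ J, IsNode Mlam ω w ∧ j ≤ w.length)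
    (_ : pathSet Mlam ω ⊆ ⋃ w ∈ J, cylinder w),
    ∑' w : J, ENNReal.ofReal (Phi D (prodT T ω w.1) α)

/-- The natural measure `M^α(Σ^ω) = lim_j M_j^α(Σ^ω)`. -/
def natMeasure (D : ℕ) (Mlam : Λ → ℕ) (T : Λ → ℕ → E →L[ℝ] E) (ω : List ℕ → Λ)
    (α : ℝ) : ℝ≥0∞ :=
  ⨆ j : ℕ, natStage D Mlam T ω α j

/-- The affinity dimension `d^ω = inf {α ≥ 0 : M^α(Σ^ω) = 0}`. -/
def affinityDim (D : ℕ) (Mlam : Λ → ℕ) (T : Λ → ℕ → E →L[ℝ] E)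
    (ω : List ℕ → Λ) : ℝ :=
  sInf {α : ℝ | 0 ≤ α ∧ natMeasure D Mlam T ω α = 0}

/-- `n` is a neck level of the code tree `ω` : all sub code trees rooted at
level `n` are identical. -/
def IsNeck (Mlam : Λ → ℕ) (ω : List ℕ → Λ) (n : ℕ) : Prop :=
  ∀ w w' : List ℕ, w.length = n → w'.length = n →
    IsNode Mlam ω w → IsNode Mlam ω w' → ∀ u : List ℕ,
      IsNode Mlam ω (w ++ u) → IsNode Mlam ω (w' ++ u) ∧ ω (w ++ u) = ω (w' ++ u)

/-- The subset of `Ω × ℕ^ℕ` of pairs `(ω, N)` forming the space `Ω̃` : with the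
convention `N 0 = 0`, the sequence `N 1 < N 2 < ⋯` is a strictly increasing
sequence of neck levels of `ω`. -/
def neckSpace (Mlam : Λ → ℕ) : Set ((List ℕ → Λ) × (ℕ → ℕ)) :=
  {p | p.2 0 = 0 ∧ StrictMono p.2 ∧ ∀ m, 1 ≤ m → IsNeck Mlam p.1 (p.2 m)}

/-- The shift `Ξ(ω, N) = (ω̂, N̂)`, `N̂ m = N (m+1) - N 1`, where the sub code tree
`ω̂` is rooted at the (leftmost) node of length `N 1`; on `neckSpace` the choice of
this node is irrelevant. -/
def Xi : ((List ℕ → Λ) × (ℕ → ℕ)) → ((List ℕ → Λ) × (ℕ → ℕ)) :=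
  fun p => (fun u => p.1 (List.replicate (p.2 1) 0 ++ u), fun m => p.2 (m + 1) - p.2 1)

theorem _root_.ENNReal.le_sum_iInf {α ι : Type*} [Nonempty ι] {s : Finset α}
    {f : α → ι → ℝ≥0∞} {c : ℝ≥0∞} (h : ∀ g : α → ι, c ≤ ∑ a ∈ s, f a (g a)) :
    c ≤ ∑ a ∈ s, ⨅ i, f a i := by
  classical
  induction s using Finset.induction_on generalizing c with
  | empty => simpa using h fun _ => Classical.arbitrary ι
  | insert b t hb ih =>
    rw [Finset.sum_insert hb, ENNReal.iInf_add]
    refine le_iInf fun i => tsub_le_iff_left.mp (ih fun g => tsub_le_iff_left.mpr ?_)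
    have hupd : ∀ a ∈ t, Function.update g b i a = g a := fun a ha =>
      Function.update_of_ne (ne_of_mem_of_not_mem ha hb) _ _
    simpa [Finset.sum_insert hb, Finset.sum_congr rfl fun a ha => congrArg (f a) (hupd a ha)]
      using h (Function.update g b i)

section Tree

variable {Mlam : Λ → ℕ} {ω : List ℕ → Λ}

lemma word_succ (i : ℕ → ℕ) (k : ℕ) : word i (k + 1) = word i k ++ [i k] := by
  simp [word, List.range_succ]

lemma word_eq_ofFn (i : ℕ → ℕ) (k : ℕ) : word i k = List.ofFn fun j : Fin k => i j := by
  apply List.ext_getElem <;> simp [word]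

lemma isNode_iff {w : List ℕ} :
    IsNode Mlam ω w ↔ ∀ j < w.length, w.getD j 0 < Mlam (ω (w.take j)) := by
  refine ⟨fun h j hj => ?_, fun h j => ?_⟩
  · rw [List.getD_eq_getElem _ _ hj]; exact h ⟨j, hj⟩
  · simpa [List.getD_eq_getElem _ _ j.isLt] using h j j.isLt

lemma isNode_nil : IsNode Mlam ω [] := fun j => j.elim0

lemma isNode_append_singleton_iff {w : List ℕ} {l : ℕ} :
    IsNode Mlam ω (w ++ [l]) ↔ IsNode Mlam ω w ∧ l < Mlam (ω w) := by
  simp only [isNode_iff, List.length_append, List.length_singleton, Nat.forall_lt_succ_right]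
  refine and_congr (forall₂_congr fun j hj => ?_) ?_
  · rw [List.getD_append _ _ _ _ hj, List.take_append_of_le_length hj.le]
  · rw [List.getD_append_right _ _ _ _ le_rfl, List.take_left' rfl, Nat.sub_self]
    rfl

lemma isNode_cons_iff {l : ℕ} {w : List ℕ} :
    IsNode Mlam ω (l :: w) ↔ l < Mlam (ω []) ∧ IsNode Mlam (fun u => ω (l :: u)) w := by
  simp only [isNode_iff, List.length_cons, Nat.forall_lt_succ_left, List.getD_cons_zero,
    List.getD_cons_succ, List.take_succ_cons, List.take_zero]

lemma isPath_iff_forall_isNode_word {i : ℕ → ℕ} :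
    IsPath Mlam ω i ↔ ∀ k, IsNode Mlam ω (word i k) := by
  refine ⟨fun h k => ?_, fun h k => ?_⟩
  · induction k with
    | zero => exact isNode_nil
    | succ k ih => exact word_succ i k ▸ isNode_append_singleton_iff.mpr ⟨ih, h k⟩
  · exact (isNode_append_singleton_iff.mp (word_succ i k ▸ h (k + 1))).2

variable (Mlam ω) in
def childSum (m : List ℕ → ℝ≥0∞) (w : List ℕ) : ℝ≥0∞ :=
  ∑ l ∈ Finset.range (Mlam (ω w)), m (w ++ [l])

lemma cylinder_nil : cylinder [] = univ := by ext; simp [cylinder, word]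

lemma finite_setOf_isNode_length_eq (k : ℕ) :
    {w | IsNode Mlam ω w ∧ w.length = k}.Finite := by
  induction k with
  | zero => exact (finite_singleton []).subset fun w hw => List.length_eq_zero_iff.mp hw.2
  | succ k ih =>
    refine (ih.biUnion fun w _ => (finite_Iio (Mlam (ω w))).image fun l => w ++ [l]).subset ?_
    rintro u ⟨hu, hlen⟩
    obtain ⟨w, l, rfl⟩ : ∃ w l, u = w ++ [l] :=
      ⟨u.dropLast, u.getLast (by rintro rfl; simp at hlen), (List.dropLast_append_getLast _).symm⟩
    rw [isNode_append_singleton_iff] at hu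
    simp only [List.length_append, List.length_singleton, Nat.add_right_cancel_iff] at hlen
    exact mem_biUnion ⟨hu.1, hlen⟩ ⟨l, hu.2, rfl⟩

lemma measurable_apply_word {α β : Type*} [MeasurableSpace α] [MeasurableSpace β]
    {F : List ℕ → α → β} (hF : ∀ w, Measurable (F w)) {g : α → ℕ → ℕ} {k : ℕ}
    (hg : ∀ j < k, Measurable fun x => g x j) :
    Measurable fun x => F (word (g x) k) x := by
  simp_rw [word_eq_ofFn]
  have hprefix : Measurable fun x (j : Fin k) => g x j :=
    measurable_pi_lambda _ fun j => hg j j.isLt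
  exact (measurable_from_prod_countable_right
    (f := fun p : (Fin k → ℕ) × α => F (List.ofFn p.1) p.2) fun v => hF (List.ofFn v)).comp
    (hprefix.prodMk measurable_id)

lemma measurableSet_cylinder (w : List ℕ) : MeasurableSet (cylinder w) :=
  measurableSet_setOfPred.mpr <|
    measurable_apply_word (F := fun u (_ : ℕ → ℕ) => u = w) (fun _ => measurable_const)
      fun j _ => measurable_pi_apply j

lemma measurableSet_pathSet : MeasurableSet (pathSet Mlam ω) := by
  have : pathSet Mlam ω = ⋂ k, {i | i k < Mlam (ω (word i k))} := by
    ext; simp [pathSet, IsPath]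
  rw [this]
  exact .iInter fun k => measurableSet_lt (measurable_pi_apply k)
    (measurable_apply_word (F := fun u (_ : ℕ → ℕ) => Mlam (ω u)) (fun _ => measurable_const)
      fun j _ => measurable_pi_apply j)

end Tree

section Coding

-- The disjunct `n ≤ l + 1` caps the search at `n - 1`, so that it succeeds for every `x`.
def partIndex (L : ℕ → ℝ) (n : ℕ) (x : ℝ) : ℕ :=
  Nat.find (⟨n, Or.inl (Nat.le_succ n)⟩ : ∃ l, n ≤ l + 1 ∨ x < L (l + 1))

lemma partIndex_spec {L : ℕ → ℝ} {n : ℕ} {x : ℝ} (h0 : L 0 ≤ x) (hn : x < L n) :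
    partIndex L n x < n ∧ L (partIndex L n x) ≤ x ∧ x < L (partIndex L n x + 1) := by
  have hex : ∃ l, n ≤ l + 1 ∨ x < L (l + 1) := ⟨n, Or.inl (Nat.le_succ n)⟩
  have hn0 : n ≠ 0 := by rintro rfl; exact (h0.trans_lt hn).false
  have hlt : Nat.find hex < n :=
    (Nat.find_le (Or.inl (by omega) : n ≤ n - 1 + 1 ∨ x < L (n - 1 + 1))).trans_lt (by omega)
  show Nat.find hex < n ∧ L (Nat.find hex) ≤ x ∧ x < L (Nat.find hex + 1)
  refine ⟨hlt, ?_, ?_⟩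
  · rcases Nat.eq_zero_or_pos (Nat.find hex) with hc | hc
    · rwa [hc]
    · have hmin := Nat.find_min hex (show Nat.find hex - 1 < Nat.find hex by omega)
      rw [Nat.sub_add_cancel hc, not_or, not_lt] at hmin
      exact hmin.2
  · rcases Nat.find_spec hex with hc | hc
    · rwa [show Nat.find hex + 1 = n by omega]
    · exact hc

lemma measurable_partIndex (L : ℕ → ℝ) (n : ℕ) : Measurable (partIndex L n) :=
  Measurable.find (f := fun l _ => l) (p := fun l x => n ≤ l + 1 ∨ x < L (l + 1))
    (fun _ => measurable_const)
    (fun l => (MeasurableSet.const (n ≤ l + 1)).union measurableSet_Iio) _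

variable {Mlam : Λ → ℕ} {ω : List ℕ → Λ} {ν : List ℕ → ℝ≥0∞}

-- The coding intervals of the children of `w` tile that of `w` from left to right.
variable (ν) in
def leftEnd (w : List ℕ) : ℝ :=
  ∑ k ∈ Finset.range w.length, ∑ l ∈ Finset.range (w.getD k 0), (ν (w.take k ++ [l])).toReal

variable (ν) in
def codeInterval (w : List ℕ) : Set ℝ := Ico (leftEnd ν w) (leftEnd ν w + (ν w).toReal)

variable (Mlam ω ν) in
def childIndex (x : ℝ) (w : List ℕ) : ℕ :=
  partIndex (fun l => leftEnd ν (w ++ [l])) (Mlam (ω w)) x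

variable (Mlam ω ν) in
def codeWord (x : ℝ) : ℕ → List ℕ
  | 0 => []
  | k + 1 => codeWord x k ++ [childIndex Mlam ω ν x (codeWord x k)]

variable (Mlam ω ν) in
def codePath (x : ℝ) (k : ℕ) : ℕ := childIndex Mlam ω ν x (codeWord Mlam ω ν x k)

lemma leftEnd_append_singleton (w : List ℕ) (l : ℕ) :
    leftEnd ν (w ++ [l]) = leftEnd ν w + ∑ l' ∈ Finset.range l, (ν (w ++ [l'])).toReal := by
  rw [leftEnd, List.length_append, List.length_singleton, Finset.sum_range_succ, leftEnd]
  congr 1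
  · refine Finset.sum_congr rfl fun k hk => ?_
    have hk : k < w.length := Finset.mem_range.mp hk
    rw [List.getD_append _ _ _ _ hk, List.take_append_of_le_length hk.le]
  · rw [List.getD_append_right _ _ _ _ le_rfl, List.take_left' rfl, Nat.sub_self]
    rfl

lemma leftEnd_append_singleton_succ (w : List ℕ) (l : ℕ) :
    leftEnd ν (w ++ [l + 1]) = leftEnd ν (w ++ [l]) + (ν (w ++ [l])).toReal := by
  rw [leftEnd_append_singleton, leftEnd_append_singleton, Finset.sum_range_succ, add_assoc]

section Additive

variable (hν : ∀ w, IsNode Mlam ω w → childSum Mlam ω ν w = ν w) (hν0 : ν [] ≠ ∞)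
include hν hν0

lemma ne_top_of_isNode {w : List ℕ} (hw : IsNode Mlam ω w) : ν w ≠ ∞ := by
  induction w using List.reverseRecOn with
  | nil => exact hν0
  | append_singleton w l ih =>
    rw [isNode_append_singleton_iff] at hw
    refine ne_top_of_le_ne_top (ih hw.1) ?_
    rw [← hν w hw.1]
    exact Finset.single_le_sum (f := fun l => ν (w ++ [l])) (fun _ _ => bot_le)
      (Finset.mem_range.mpr hw.2)

lemma leftEnd_append_branching {w : List ℕ} (hw : IsNode Mlam ω w) :
    leftEnd ν (w ++ [Mlam (ω w)]) = leftEnd ν w + (ν w).toReal := by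
  rw [leftEnd_append_singleton, ← ENNReal.toReal_sum fun l hl => ne_top_of_isNode hν hν0
    (isNode_append_singleton_iff.mpr ⟨hw, Finset.mem_range.mp hl⟩)]
  rw [← childSum, hν w hw]

lemma childIndex_spec {w : List ℕ} (hw : IsNode Mlam ω w) {x : ℝ} (hx : x ∈ codeInterval ν w) :
    childIndex Mlam ω ν x w < Mlam (ω w) ∧
      x ∈ codeInterval ν (w ++ [childIndex Mlam ω ν x w]) := by
  have h0 : leftEnd ν (w ++ [0]) = leftEnd ν w := by simp [leftEnd_append_singleton]
  obtain ⟨hlt, hle, hlt'⟩ := partIndex_spec (L := fun l => leftEnd ν (w ++ [l]))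
    (h0.symm ▸ hx.1) ((leftEnd_append_branching hν hν0 hw).symm ▸ hx.2)
  exact ⟨hlt, hle, by rwa [← leftEnd_append_singleton_succ]⟩

lemma codeWord_spec {x : ℝ} (hx : x ∈ codeInterval ν []) (k : ℕ) :
    IsNode Mlam ω (codeWord Mlam ω ν x k) ∧ x ∈ codeInterval ν (codeWord Mlam ω ν x k) := by
  induction k with
  | zero => exact ⟨isNode_nil, hx⟩
  | succ k ih =>
    obtain ⟨hlt, hx'⟩ := childIndex_spec hν hν0 ih.1 ih.2
    exact ⟨isNode_append_singleton_iff.mpr ⟨ih.1, hlt⟩, hx'⟩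

end Additive

lemma word_codePath (x : ℝ) (k : ℕ) : word (codePath Mlam ω ν x) k = codeWord Mlam ω ν x k := by
  induction k with
  | zero => rfl
  | succ k ih => rw [word_succ, ih]; rfl

lemma measurable_codePath : Measurable (codePath Mlam ω ν) := by
  refine measurable_pi_lambda _ fun k => ?_
  induction k using Nat.strong_induction_on with
  | _ k ih =>
    simp_rw [codePath, ← word_codePath]
    exact measurable_apply_word (F := fun w x => childIndex Mlam ω ν x w)
      (fun _ => measurable_partIndex _ _) ih

theorem exists_measure_cylinder_le_of_additive
    (hν : ∀ w, IsNode Mlam ω w → childSum Mlam ω ν w = ν w) (hν0 : ν [] ≠ ∞) :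
    ∃ μ : Measure (ℕ → ℕ), μ univ = ν [] ∧ μ (pathSet Mlam ω)ᶜ = 0 ∧
      ∀ w, IsNode Mlam ω w → μ (cylinder w) ≤ ν w := by
  have hvol (w : List ℕ) : volume (codeInterval ν w) = ENNReal.ofReal (ν w).toReal := by
    simp [codeInterval, Real.volume_Ico]
  refine ⟨(volume.restrict (codeInterval ν [])).map (codePath Mlam ω ν), ?_, ?_, fun w hw => ?_⟩
  · rw [Measure.map_apply measurable_codePath .univ, preimage_univ, Measure.restrict_apply_univ,
      hvol, ENNReal.ofReal_toReal hν0]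
  · rw [Measure.map_apply measurable_codePath measurableSet_pathSet.compl,
      Measure.restrict_apply' (s := codeInterval ν []) measurableSet_Ico]
    refine measure_mono_null (fun x ⟨hxc, hx⟩ => hxc ?_) measure_empty
    exact isPath_iff_forall_isNode_word.mpr fun k =>
      word_codePath x k ▸ (codeWord_spec hν hν0 hx k).1
  · rw [Measure.map_apply measurable_codePath (measurableSet_cylinder w),
      Measure.restrict_apply' (s := codeInterval ν []) measurableSet_Ico,
      ← ENNReal.ofReal_toReal (ne_top_of_isNode hν hν0 hw),
      ← hvol]
    refine measure_mono fun x ⟨hxw, hx⟩ => ?_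
    have hword : codeWord Mlam ω ν x w.length = w := (word_codePath x _).symm.trans hxw
    exact hword ▸ (codeWord_spec hν hν0 hx w.length).2

end Coding

section MassDistribution

variable {Mlam : Λ → ℕ} {ω : List ℕ → Λ} {m : List ℕ → ℝ≥0∞}

-- The mass of a node is shared among its children in proportion to `m`.
variable (Mlam ω m) in
def splitMass (w : List ℕ) : ℝ≥0∞ :=
  m [] * ∏ k ∈ Finset.range w.length, m (w.take (k + 1)) / childSum Mlam ω m (w.take k)

lemma splitMass_nil : splitMass Mlam ω m [] = m [] := by simp [splitMass]

lemma splitMass_append_singleton (w : List ℕ) (l : ℕ) :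
    splitMass Mlam ω m (w ++ [l]) =
      splitMass Mlam ω m w * (m (w ++ [l]) / childSum Mlam ω m w) := by
  rw [splitMass, List.length_append, List.length_singleton, Finset.prod_range_succ, ← mul_assoc,
    List.take_left' rfl, List.take_of_length_le (by simp), splitMass]
  congr 2
  refine Finset.prod_congr rfl fun k hk => ?_
  have hk : k < w.length := Finset.mem_range.mp hk
  rw [List.take_append_of_le_length hk, List.take_append_of_le_length hk.le]

variable (hsub : ∀ w, IsNode Mlam ω w → m w ≤ childSum Mlam ω m w)
include hsub

lemma splitMass_le {w : List ℕ} (hw : IsNode Mlam ω w) : splitMass Mlam ω m w ≤ m w := by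
  induction w using List.reverseRecOn with
  | nil => exact splitMass_nil.le
  | append_singleton w l ih =>
    have hw' := (isNode_append_singleton_iff.mp hw).1
    rw [splitMass_append_singleton]
    calc _ ≤ childSum Mlam ω m w * (m (w ++ [l]) / childSum Mlam ω m w) := by
          gcongr; exact (ih hw').trans (hsub w hw')
      _ ≤ m (w ++ [l]) := ENNReal.mul_div_le

lemma childSum_splitMass (hfin : ∀ w, IsNode Mlam ω w → m w ≠ ∞) {w : List ℕ}
    (hw : IsNode Mlam ω w) :
    childSum Mlam ω (splitMass Mlam ω m) w = splitMass Mlam ω m w := by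
  have hsum : childSum Mlam ω (splitMass Mlam ω m) w =
      splitMass Mlam ω m w * (childSum Mlam ω m w * (childSum Mlam ω m w)⁻¹) := by
    simp only [childSum, splitMass_append_singleton, div_eq_mul_inv, ← Finset.mul_sum,
      ← Finset.sum_mul]
  rcases eq_or_ne (childSum Mlam ω m w) 0 with h0 | h0
  · have : splitMass Mlam ω m w = 0 :=
      le_zero_iff.mp (h0 ▸ (splitMass_le hsub hw).trans (hsub w hw))
    rw [hsum, this, zero_mul]
  · have htop : childSum Mlam ω m w ≠ ∞ := ENNReal.sum_ne_top.mpr fun l hl =>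
      hfin _ (isNode_append_singleton_iff.mpr ⟨hw, Finset.mem_range.mp hl⟩)
    rw [hsum, ENNReal.mul_inv_cancel h0 htop, mul_one]

theorem exists_measure_cylinder_le_of_subadditive (hfin : ∀ w, IsNode Mlam ω w → m w ≠ ∞) :
    ∃ μ : Measure (ℕ → ℕ), μ univ = m [] ∧ μ (pathSet Mlam ω)ᶜ = 0 ∧
      ∀ w, IsNode Mlam ω w → μ (cylinder w) ≤ m w := by
  obtain ⟨μ, huniv, hsupp, hcyl⟩ := exists_measure_cylinder_le_of_additive
    (fun w hw => childSum_splitMass hsub hfin hw) (splitMass_nil.symm ▸ hfin [] isNode_nil)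
  exact ⟨μ, huniv.trans splitMass_nil, hsupp, fun w hw => (hcyl w hw).trans (splitMass_le hsub hw)⟩

end MassDistribution

-- `M_j^α(Σ^ω ∩ [w])`, in the notation of `natStage`.
def natStageCyl (D : ℕ) (Mlam : Λ → ℕ) (T : Λ → ℕ → E →L[ℝ] E) (ω : List ℕ → Λ)
    (α : ℝ) (j : ℕ) (w : List ℕ) : ℝ≥0∞ :=
  ⨅ (J : Set (List ℕ)) (_ : ∀ u ∈ J, IsNode Mlam ω u ∧ j ≤ u.length)
    (_ : pathSet Mlam ω ∩ cylinder w ⊆ ⋃ u ∈ J, cylinder u),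
    ∑' u : J, ENNReal.ofReal (Phi D (prodT T ω u.1) α)

section NatStageCyl

variable {D : ℕ} {Mlam : Λ → ℕ} {T : Λ → ℕ → E →L[ℝ] E} {ω : List ℕ → Λ} {α : ℝ} {j : ℕ}

lemma natStageCyl_nil : natStageCyl D Mlam T ω α j [] = natStage D Mlam T ω α j := by
  simp [natStageCyl, natStage, cylinder_nil]

lemma natStageCyl_le_Phi {w : List ℕ} (hw : IsNode Mlam ω w) (hj : j ≤ w.length) :
    natStageCyl D Mlam T ω α j w ≤ ENNReal.ofReal (Phi D (prodT T ω w) α) :=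
  (iInf₂_le {w} (by simpa using ⟨hw, hj⟩)).trans <|
    (iInf_le _ (inter_subset_right.trans (by simp))).trans
      (tsum_singleton w fun u => ENNReal.ofReal (Phi D (prodT T ω u) α)).le

lemma natStageCyl_le_childSum (w : List ℕ) :
    natStageCyl D Mlam T ω α j w ≤ childSum Mlam ω (natStageCyl D Mlam T ω α j) w := by
  refine ENNReal.le_sum_iInf fun J => ?_
  by_cases hJ : ∀ l ∈ Finset.range (Mlam (ω w)), (∀ u ∈ J l, IsNode Mlam ω u ∧ j ≤ u.length) ∧
      pathSet Mlam ω ∩ cylinder (w ++ [l]) ⊆ ⋃ u ∈ J l, cylinder u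
  · have hgood : ∀ u ∈ ⋃ l ∈ Finset.range (Mlam (ω w)), J l, IsNode Mlam ω u ∧ j ≤ u.length := by
      intro u hu
      obtain ⟨l, hl, hu⟩ := mem_iUnion₂.mp hu
      exact (hJ l hl).1 u hu
    have hcover : pathSet Mlam ω ∩ cylinder w ⊆
        ⋃ u ∈ ⋃ l ∈ Finset.range (Mlam (ω w)), J l, cylinder u := by
      rintro i ⟨hi, hiw⟩
      have hiw : word i w.length = w := hiw
      have hl : i w.length ∈ Finset.range (Mlam (ω w)) := by
        have := hi w.length
        rwa [hiw, ← Finset.mem_range] at this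
      obtain ⟨u, hu, hiu⟩ := mem_iUnion₂.mp <| (hJ _ hl).2
        ⟨hi, by simp [cylinder, word_succ, hiw]⟩
      exact mem_iUnion₂.mpr ⟨u, mem_iUnion₂.mpr ⟨_, hl, hu⟩, hiu⟩
    calc natStageCyl D Mlam T ω α j w
        ≤ ∑' u : ⋃ l ∈ Finset.range (Mlam (ω w)), J l, ENNReal.ofReal (Phi D (prodT T ω u) α) :=
          iInf_le_of_le _ (iInf_le_of_le hgood (iInf_le _ hcover))
      _ ≤ ∑ l ∈ Finset.range (Mlam (ω w)), ∑' u : J l, ENNReal.ofReal (Phi D (prodT T ω u) α) :=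
          ENNReal.tsum_biUnion_le (fun u => ENNReal.ofReal (Phi D (prodT T ω u) α)) _ _
      _ ≤ _ := Finset.sum_le_sum fun l _ => le_iInf₂ fun _ _ => le_rfl
  · push Not at hJ
    obtain ⟨l, hl, hbad⟩ := hJ
    refine le_top.trans (ENNReal.sum_eq_top.mpr ⟨l, hl, ?_⟩).ge
    simp only [iInf_eq_top]
    exact fun hA hB => absurd hB (hbad hA)

lemma natStageCyl_ne_top {w : List ℕ} (hw : IsNode Mlam ω w) :
    natStageCyl D Mlam T ω α j w ≠ ∞ := by
  suffices ∀ n w, IsNode Mlam ω w → j ≤ w.length + n → natStageCyl D Mlam T ω α j w ≠ ∞ from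
    this j w hw (by omega)
  intro n
  induction n with
  | zero =>
    exact fun w hw hj => ne_top_of_le_ne_top ENNReal.ofReal_ne_top (natStageCyl_le_Phi hw hj)
  | succ n ih =>
    refine fun w hw hj => ne_top_of_le_ne_top ?_ (natStageCyl_le_childSum w)
    exact ENNReal.sum_ne_top.mpr fun l hl =>
      ih _ (isNode_append_singleton_iff.mpr ⟨hw, Finset.mem_range.mp hl⟩) (by simp; omega)

lemma exists_natStage_ne_zero (hα : 0 ≤ α) (h : α < affinityDim D Mlam T ω) :
    ∃ j, natStage D Mlam T ω α j ≠ 0 := by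
  by_contra! h0
  exact h.not_ge (csInf_le ⟨0, fun β hβ => hβ.1⟩ ⟨hα, by simp [natMeasure, h0]⟩)

end NatStageCyl

lemma exists_cylinder_le_mul {Mlam : Λ → ℕ} {ω : List ℕ → Λ} {μ : Measure (ℕ → ℕ)}
    [IsFiniteMeasure μ] {φ : List ℕ → ℝ} (hφ : ∀ w, IsNode Mlam ω w → 0 < φ w) {j : ℕ}
    (hlong : ∀ w, IsNode Mlam ω w → j ≤ w.length → μ (cylinder w) ≤ ENNReal.ofReal (φ w)) :
    ∃ c : ℝ, ∀ w, IsNode Mlam ω w → μ (cylinder w) ≤ ENNReal.ofReal (c * φ w) := by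
  have hshort : {w | IsNode Mlam ω w ∧ w.length < j}.Finite :=
    ((finite_Iio j).biUnion fun k _ => finite_setOf_isNode_length_eq k).subset
      fun w hw => mem_biUnion hw.2 ⟨hw.1, rfl⟩
  obtain ⟨C, hC⟩ := (hshort.image fun w => (φ w)⁻¹).bddAbove
  refine ⟨max 1 ((μ univ).toReal * C), fun w hw => ?_⟩
  have hφw := hφ w hw
  rcases le_or_gt j w.length with hj | hj
  · exact (hlong w hw hj).trans
      (ENNReal.ofReal_le_ofReal (le_mul_of_one_le_left hφw.le (le_max_left _ _)))
  · have hCφ : 1 ≤ C * φ w := calc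
      1 = (φ w)⁻¹ * φ w := (inv_mul_cancel₀ hφw.ne').symm
      _ ≤ C * φ w := by gcongr; exact hC (mem_image_of_mem _ ⟨hw, hj⟩)
    calc μ (cylinder w) ≤ μ univ := measure_mono (subset_univ _)
      _ = ENNReal.ofReal (μ univ).toReal := (ENNReal.ofReal_toReal (measure_ne_top μ univ)).symm
      _ ≤ ENNReal.ofReal (max 1 ((μ univ).toReal * C) * φ w) := by
        refine ENNReal.ofReal_le_ofReal ?_
        calc (μ univ).toReal ≤ (μ univ).toReal * (C * φ w) :=
              le_mul_of_one_le_right ENNReal.toReal_nonneg hCφ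
          _ = (μ univ).toReal * C * φ w := (mul_assoc _ _ _).symm
          _ ≤ _ := by gcongr; exact le_max_right _ _

section SingularValues

lemma le_singVal {T : E →L[ℝ] E} {c : ℝ} (hc : ∀ v, c * ‖v‖ ≤ ‖T v‖) {j : ℕ} (hj : 1 ≤ j)
    {V : Submodule ℝ E} (hV : Module.finrank ℝ V = j) : c ≤ singVal T j := by
  have hunit (W : Submodule ℝ E) (hW : Module.finrank ℝ W = j) : ∃ v ∈ W, ‖v‖ = 1 := by
    have : Nontrivial W := Module.nontrivial_of_finrank_pos (R := ℝ) (M := W) (by omega)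
    obtain ⟨v, hv⟩ := exists_norm_eq W zero_le_one
    exact ⟨v, v.2, hv⟩
  have hbdd (W : Submodule ℝ E) : BddBelow {s : ℝ | ∃ v ∈ W, ‖v‖ = 1 ∧ s = ‖T v‖} :=
    ⟨0, by rintro _ ⟨v, -, -, rfl⟩; exact norm_nonneg _⟩
  refine le_csSup_of_le ⟨‖T‖, ?_⟩ ⟨V, hV, rfl⟩ ?_
  · rintro _ ⟨W, hW, rfl⟩
    obtain ⟨v, hvW, hv⟩ := hunit W hW
    exact (csInf_le (hbdd W) ⟨v, hvW, hv, rfl⟩).trans (by simpa [hv] using T.le_opNorm v)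
  · obtain ⟨v, hvV, hv⟩ := hunit V hV
    refine le_csInf ⟨_, v, hvV, hv, rfl⟩ ?_
    rintro _ ⟨u, -, hu, rfl⟩
    simpa [hu] using hc u

lemma singVal_pos [FiniteDimensional ℝ E] {T : E →L[ℝ] E} (hT : Function.Injective T) {j : ℕ}
    (hj : 1 ≤ j) (hjE : j ≤ Module.finrank ℝ E) : 0 < singVal T j := by
  obtain ⟨K, hK, hanti⟩ := (T : E →ₗ[ℝ] E).exists_antilipschitzWith (LinearMap.ker_eq_bot.mpr hT)
  let b := Module.finBasis ℝ E
  have hV : Module.finrank ℝ (Submodule.span ℝ (range (b ∘ Fin.castLE hjE))) = j := by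
    rw [finrank_span_eq_card (b.linearIndependent.comp _ (Fin.castLE_injective hjE)),
      Fintype.card_fin]
  refine (inv_pos.mpr (NNReal.coe_pos.mpr hK)).trans_le (le_singVal (fun v => ?_) hj hV)
  rw [inv_mul_le_iff₀ (NNReal.coe_pos.mpr hK)]
  exact T.bound_of_antilipschitz hanti v

lemma Phi_pos [FiniteDimensional ℝ E] {D : ℕ} (hD : 1 ≤ D) (hDE : D ≤ Module.finrank ℝ E)
    {T : E →L[ℝ] E} (hT : Function.Injective T) (α : ℝ) : 0 < Phi D T α := by
  have hm : 1 ≤ min (⌊α⌋₊ + 1) D := le_min (Nat.le_add_left 1 _) hD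
  refine mul_pos (Finset.prod_pos fun i hi => singVal_pos hT (Nat.le_add_left 1 i) ?_)
    (Real.rpow_pos_of_pos (singVal_pos hT hm ((min_le_right _ _).trans hDE)) _)
  have := Finset.mem_range.mp hi
  omega

lemma injective_prodT {Mlam : Λ → ℕ} {T : Λ → ℕ → E →L[ℝ] E}
    (hT : ∀ l i, i < Mlam l → Function.Injective (T l i)) {w : List ℕ} :
    ∀ {ω : List ℕ → Λ}, IsNode Mlam ω w → Function.Injective (prodT T ω w) := by
  induction w with
  | nil => exact fun _ => Function.injective_id
  | cons l w ih =>
    intro ω hw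
    rw [isNode_cons_iff] at hw
    exact (hT _ _ hw.1).comp (ih hw.2)

end SingularValues

theorem statement3_general
    {Λ : Type*} (D : ℕ) (hD : 1 ≤ D)
    (Mlam : Λ → ℕ)
    (T : Λ → ℕ → EuclideanSpace ℝ (Fin D) →L[ℝ] EuclideanSpace ℝ (Fin D))
    (hTns : ∀ l i, i < Mlam l → Function.Injective (T l i))
    (ω : List ℕ → Λ) (α : ℝ) (hα0 : 0 < α) (hαd : α < affinityDim D Mlam T ω) :
    ∃ μ : Measure (ℕ → ℕ), IsFiniteMeasure μ ∧ μ ≠ 0 ∧ μ (pathSet Mlam ω)ᶜ = 0 ∧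
      ∃ c : ℝ, ∀ w : List ℕ, IsNode Mlam ω w →
        μ (cylinder w) ≤ ENNReal.ofReal (c * Phi D (prodT T ω w) α) := by
  obtain ⟨j, hj⟩ := exists_natStage_ne_zero hα0.le hαd
  obtain ⟨μ, huniv, hsupp, hcyl⟩ := exists_measure_cylinder_le_of_subadditive
    (m := natStageCyl D Mlam T ω α j) (fun w _ => natStageCyl_le_childSum w)
    fun w hw => natStageCyl_ne_top hw
  have : IsFiniteMeasure μ := ⟨huniv ▸ (natStageCyl_ne_top isNode_nil).lt_top⟩
  rw [natStageCyl_nil] at huniv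
  refine ⟨μ, this, fun h0 => hj (by rw [← huniv, h0, Measure.coe_zero, Pi.zero_apply]), hsupp,
    exists_cylinder_le_mul (fun w hw => Phi_pos hD (by simp) (injective_prodT hTns hw) α)
      fun w hw hjw => (hcyl w hw).trans (natStageCyl_le_Phi hw hjw)⟩

/-- \eqref{0507}, cf. \cite[Lemma 4.2]{F88}: for `0 < α < d^ω` there exist a
nonzero finite Borel measure `μ^ω` on `Σ^ω` and a constant `c(ω)` such that
`μ^ω([i_k]) ≤ c(ω) Φ^α(T_{i_k}^ω)` for every cylinder. -/
theorem statement3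
    {Λ : Type*} (D : ℕ) (hD : 1 ≤ D)
    (Mlam : Λ → ℕ) (hM1 : ∀ l, 1 ≤ Mlam l) (M : ℕ) (hMsup : ∀ l, Mlam l ≤ M)
    (T : Λ → ℕ → EuclideanSpace ℝ (Fin D) →L[ℝ] EuclideanSpace ℝ (Fin D))
    (hTns : ∀ l i, i < Mlam l → Function.Injective (T l i))
    (σbar : ℝ) (hσbar : σbar < 1)
    (hTnorm : ∀ l i, i < Mlam l → ‖T l i‖ ≤ σbar)
    (ω : List ℕ → Λ) (α : ℝ) (hα0 : 0 < α) (hαd : α < affinityDim D Mlam T ω) :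
    ∃ μ : Measure (ℕ → ℕ), IsFiniteMeasure μ ∧ μ ≠ 0 ∧ μ (pathSet Mlam ω)ᶜ = 0 ∧
      ∃ c : ℝ, ∀ w : List ℕ, IsNode Mlam ω w →
        μ (cylinder w) ≤ ENNReal.ofReal (c * Phi D (prodT T ω w) α) :=
  statement3_general D hD Mlam T hTns ω α hα0 hαd

end CodeTreeFractal
end
end

section
/- The lower singular value function is supermultiplicative on ℝ²: for all non-singular linear maps T and U on ℝ² and all 0 ≤ α ≤ 2, Φ̲^α(TU) ≥ Φ̲^α(T) Φ̲^α(U). -/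
open scoped ENNReal Topology

noncomputable section

namespace CodeTreeFractal

/-- The first (largest) singular value of a linear map on `ℝ²`: the operator norm. -/
def sv1 (T : EuclideanSpace ℝ (Fin 2) →L[ℝ] EuclideanSpace ℝ (Fin 2)) : ℝ := ‖T‖

/-- The second (smallest) singular value of a linear map on `ℝ²`: the minimum of
`‖T v‖` over unit vectors `v`. -/
def sv2 (T : EuclideanSpace ℝ (Fin 2) →L[ℝ] EuclideanSpace ℝ (Fin 2)) : ℝ :=
  sInf {s : ℝ | ∃ v : EuclideanSpace ℝ (Fin 2), ‖v‖ = 1 ∧ s = ‖T v‖}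

/-- The singular value function `Φ^α` on `ℝ²`, for `0 ≤ α ≤ 2`. -/
def Phi2 (T : EuclideanSpace ℝ (Fin 2) →L[ℝ] EuclideanSpace ℝ (Fin 2)) (α : ℝ) : ℝ :=
  if α ≤ 1 then sv1 T ^ α else sv1 T * sv2 T ^ (α - 1)

/-- The lower singular value function `Φ̲^α` on `ℝ²`, for `0 ≤ α ≤ 2`. -/
def PhiLow2 (T : EuclideanSpace ℝ (Fin 2) →L[ℝ] EuclideanSpace ℝ (Fin 2)) (α : ℝ) : ℝ :=
  if α ≤ 1 then sv2 T ^ α else sv2 T * sv1 T ^ (α - 1)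

/-! For `α ≤ 1` the claim is `σ₂(TU) ≥ σ₂(T) σ₂(U)`, which follows from `‖T U v‖ ≥ σ₂(T) ‖U v‖`.
For `α > 1` write `Φ̲^α(T) = σ₂(T)^(2-α) (σ₁(T) σ₂(T))^(α-1)`: on `ℝ²` one has
`σ₁(T) σ₂(T) = |det T|`, which is multiplicative. That identity comes from the adjugate:
`adj M * M = M * adj M = det M • 1`, and in dimension two `adj M = J Mᵀ J⁻¹` for the rotation `J`
by a right angle, so `‖adj M‖ = ‖M‖`. -/

open Matrix
open scoped Matrix.Norms.L2Operator

local notation "E2" => EuclideanSpace ℝ (Fin 2)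

lemma _root_.Matrix.rotation_mem_unitary :
    (!![0, -1; 1, 0] : Matrix (Fin 2) (Fin 2) ℝ) ∈ unitary (Matrix (Fin 2) (Fin 2) ℝ) := by
  rw [mem_unitaryGroup_iff]
  ext i j; fin_cases i <;> fin_cases j <;> simp [mul_apply, Fin.sum_univ_two]

lemma _root_.Matrix.adjugate_fin_two_eq_rotation_conj (M : Matrix (Fin 2) (Fin 2) ℝ) :
    M.adjugate = !![0, -1; 1, 0] * Mᴴ * star !![0, -1; 1, 0] := by
  rw [adjugate_fin_two, star_eq_conjTranspose, conjTranspose_eq_transpose_of_trivial]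
  ext i j; fin_cases i <;> fin_cases j <;> simp [mul_apply, vecMul, dotProduct, Fin.sum_univ_two]

lemma _root_.Matrix.l2_opNorm_adjugate_fin_two (M : Matrix (Fin 2) (Fin 2) ℝ) :
    ‖M.adjugate‖ = ‖M‖ := by
  rw [adjugate_fin_two_eq_rotation_conj, CStarRing.norm_mul_mem_unitary _
    (Unitary.star_mem rotation_mem_unitary), CStarRing.norm_mem_unitary_mul _ rotation_mem_unitary,
    l2_opNorm_conjTranspose]

lemma _root_.Matrix.det_toEuclideanCLM (M : Matrix (Fin 2) (Fin 2) ℝ) :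
    LinearMap.det (toEuclideanCLM (𝕜 := ℝ) M : E2 →ₗ[ℝ] E2) = M.det := by
  rw [← LinearMap.det_toMatrix (EuclideanSpace.basisFun (Fin 2) ℝ).toBasis]
  congr 1
  ext i j
  simp [LinearMap.toMatrix_apply, mulVec, dotProduct]

lemma sv2_le (T : E2 →L[ℝ] E2) {v : E2} (hv : ‖v‖ = 1) : sv2 T ≤ ‖T v‖ :=
  csInf_le ⟨0, by rintro s ⟨w, -, rfl⟩; exact norm_nonneg _⟩ ⟨v, hv, rfl⟩

lemma le_sv2 (T : E2 →L[ℝ] E2) {c : ℝ} (h : ∀ v : E2, ‖v‖ = 1 → c ≤ ‖T v‖) : c ≤ sv2 T :=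
  le_csInf ⟨_, EuclideanSpace.single 0 1, by simp, rfl⟩ (by rintro s ⟨v, hv, rfl⟩; exact h v hv)

lemma sv2_nonneg (T : E2 →L[ℝ] E2) : 0 ≤ sv2 T :=
  le_sv2 T fun _ _ ↦ norm_nonneg _

lemma sv2_mul_norm_le (T : E2 →L[ℝ] E2) (x : E2) : sv2 T * ‖x‖ ≤ ‖T x‖ := by
  rcases eq_or_ne x 0 with rfl | hx
  · simp
  have hx' : 0 < ‖x‖ := norm_pos_iff.mpr hx
  have hunit : ‖‖x‖⁻¹ • x‖ = 1 := by rw [norm_smul, norm_inv, norm_norm, inv_mul_cancel₀ hx'.ne']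
  have h := sv2_le T hunit
  rwa [map_smul, norm_smul, norm_inv, norm_norm, ← div_eq_inv_mul, le_div_iff₀ hx'] at h

lemma sv2_mul_sv2_le_sv2_comp (T U : E2 →L[ℝ] E2) : sv2 T * sv2 U ≤ sv2 (T.comp U) :=
  le_sv2 _ fun v hv ↦ calc
    sv2 T * sv2 U ≤ sv2 T * ‖U v‖ := by gcongr; exacts [sv2_nonneg T, sv2_le U hv]
    _ ≤ ‖T (U v)‖ := sv2_mul_norm_le T (U v)

lemma abs_det_le_sv1_mul_sv2 (M : Matrix (Fin 2) (Fin 2) ℝ) :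
    |M.det| ≤ sv1 (toEuclideanCLM (𝕜 := ℝ) M) * sv2 (toEuclideanCLM (𝕜 := ℝ) M) := by
  have hadj (v : E2) : |M.det| * ‖v‖ ≤ ‖M‖ * ‖toEuclideanCLM (𝕜 := ℝ) M v‖ := calc
    |M.det| * ‖v‖ = ‖toEuclideanCLM (𝕜 := ℝ) (M.adjugate * M) v‖ := by
      rw [adjugate_mul, map_smul, map_one]; simp [norm_smul]
    _ ≤ ‖M.adjugate‖ * ‖toEuclideanCLM (𝕜 := ℝ) M v‖ := by
      rw [map_mul]; exact (toEuclideanCLM (𝕜 := ℝ) M.adjugate).le_opNorm _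
    _ = ‖M‖ * ‖toEuclideanCLM (𝕜 := ℝ) M v‖ := by rw [l2_opNorm_adjugate_fin_two]
  rcases (norm_nonneg M).eq_or_lt with hM | hM
  · have hdet : M.det = 0 := by simpa [← hM] using hadj (EuclideanSpace.single 0 1)
    rw [hdet, abs_zero]
    exact mul_nonneg (norm_nonneg _) (sv2_nonneg _)
  rw [sv1, ← cstar_norm_def, mul_comm, ← div_le_iff₀ hM]
  exact le_sv2 _ fun v hv ↦ (div_le_iff₀' hM).mpr (by simpa [hv] using hadj v)

lemma sv1_mul_sv2_le_abs_det (M : Matrix (Fin 2) (Fin 2) ℝ) :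
    sv1 (toEuclideanCLM (𝕜 := ℝ) M) * sv2 (toEuclideanCLM (𝕜 := ℝ) M) ≤ |M.det| := by
  set T := toEuclideanCLM (𝕜 := ℝ) M
  have hsv2 := sv2_nonneg T
  rw [sv1, ← cstar_norm_def, ← l2_opNorm_adjugate_fin_two, mul_comm, cstar_norm_def,
    ← abs_of_nonneg hsv2, ← Real.norm_eq_abs, ← norm_smul]
  refine ContinuousLinearMap.opNorm_le_bound _ (abs_nonneg _) fun v ↦ ?_
  calc ‖(sv2 T • toEuclideanCLM (𝕜 := ℝ) M.adjugate) v‖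
      = sv2 T * ‖toEuclideanCLM (𝕜 := ℝ) M.adjugate v‖ := by
        rw [_root_.smul_apply, norm_smul, Real.norm_of_nonneg hsv2]
    _ ≤ ‖T (toEuclideanCLM (𝕜 := ℝ) M.adjugate v)‖ := sv2_mul_norm_le T _
    _ = |M.det| * ‖v‖ := by
      rw [show T (toEuclideanCLM (𝕜 := ℝ) M.adjugate v) =
        toEuclideanCLM (𝕜 := ℝ) (M * M.adjugate) v by rw [map_mul]; rfl,
        mul_adjugate, map_smul, map_one]
      simp [norm_smul]

lemma sv1_mul_sv2_eq_abs_det (T : E2 →L[ℝ] E2) :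
    sv1 T * sv2 T = |LinearMap.det (T : E2 →ₗ[ℝ] E2)| := by
  obtain ⟨M, rfl⟩ : ∃ M, toEuclideanCLM (𝕜 := ℝ) M = T := ⟨_, StarAlgEquiv.apply_symm_apply _ T⟩
  rw [det_toEuclideanCLM]
  exact le_antisymm (sv1_mul_sv2_le_abs_det M) (abs_det_le_sv1_mul_sv2 M)

lemma PhiLow2_of_one_lt (T : E2 →L[ℝ] E2) {α : ℝ} (hα : 1 < α) :
    PhiLow2 T α = sv2 T ^ (2 - α) * |LinearMap.det (T : E2 →ₗ[ℝ] E2)| ^ (α - 1) := by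
  have hsv1 : 0 ≤ sv1 T := norm_nonneg T
  have hsv2 := sv2_nonneg T
  rw [PhiLow2, if_neg hα.not_ge, ← sv1_mul_sv2_eq_abs_det, Real.mul_rpow hsv1 hsv2, mul_left_comm,
    ← Real.rpow_add' hsv2 (by norm_num), show 2 - α + (α - 1) = (1 : ℝ) by ring, Real.rpow_one,
    mul_comm]

theorem statement15_general
    (T U : EuclideanSpace ℝ (Fin 2) →L[ℝ] EuclideanSpace ℝ (Fin 2))
    (α : ℝ) (hα0 : 0 ≤ α) (hα2 : α ≤ 2) :
    PhiLow2 T α * PhiLow2 U α ≤ PhiLow2 (T.comp U) α := by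
  have hsv2 := sv2_mul_sv2_le_sv2_comp T U
  have hT := sv2_nonneg T
  have hU := sv2_nonneg U
  rcases le_or_gt α 1 with hα1 | hα1
  · simp only [PhiLow2, if_pos hα1]
    rw [← Real.mul_rpow hT hU]
    exact Real.rpow_le_rpow (by positivity) hsv2 hα0
  · rw [PhiLow2_of_one_lt _ hα1, PhiLow2_of_one_lt _ hα1, PhiLow2_of_one_lt _ hα1,
      ContinuousLinearMap.toLinearMap_comp, LinearMap.det_comp, abs_mul,
      Real.mul_rpow (abs_nonneg _) (abs_nonneg _), mul_mul_mul_comm, ← Real.mul_rpow hT hU]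
    gcongr

/-- Remark `lowerpressure`: the lower singular value function is
supermultiplicative on `ℝ²`: `Φ̲^α(TU) ≥ Φ̲^α(T) Φ̲^α(U)` for `0 ≤ α ≤ 2`. -/
theorem statement15
    (T U : EuclideanSpace ℝ (Fin 2) →L[ℝ] EuclideanSpace ℝ (Fin 2))
    (hT : Function.Injective T) (hU : Function.Injective U)
    (α : ℝ) (hα0 : 0 ≤ α) (hα2 : α ≤ 2) :
    PhiLow2 T α * PhiLow2 U α ≤ PhiLow2 (T.comp U) α :=
  statement15_general T U α hα0 hα2

end CodeTreeFractal
end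
end
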